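/- The scheme □Kφ → □φ is not derivable in EL5: there exists a formula φ ∈ Fm (e.g., a propositional variable x) such that ⊬_{EL5} □Kφ → □φ. -/

import Mathlib

/-- Formulas of the modal-epistemic language: variables, ⊥, ∧, ∨, →, □, K. -/
inductive Fm : Type
  | var : ℕ → Fm
  | bot : Fm
  | and : Fm → Fm → Fm
  | or : Fm → Fm → Fm
  | imp : Fm → Fm → Fm
  | box : Fm → Fm
  | k : Fm → Fm
  deriving DecidableEq

namespace Fm

/-- ¬φ := φ → ⊥ -/
def neg (φ : Fm) : Fm := φ.imp .bot

/-- ⊤ := ¬⊥ -/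
def top : Fm := neg .bot

/-- φ ↔ ψ := (φ→ψ) ∧ (ψ→φ) -/
def iff (φ ψ : Fm) : Fm := (φ.imp ψ).and (ψ.imp φ)

/-- Propositional identity φ ≡ ψ := □(φ→ψ) ∧ □(ψ→φ). -/
def ident (φ ψ : Fm) : Fm := ((φ.imp ψ).box).and ((ψ.imp φ).box)

/-- Substitution of `σ` for every occurrence of the variable `x`. -/
def subst (x : ℕ) (σ : Fm) : Fm → Fm
  | var n => if n = x then σ else var n
  | bot => bot
  | and a b => and (subst x σ a) (subst x σ b)
  | or a b => or (subst x σ a) (subst x σ b)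
  | imp a b => imp (subst x σ a) (subst x σ b)
  | box a => box (subst x σ a)
  | k a => k (subst x σ a)

/-- Propositional formulas (the set Fm₀): neither □ nor K occurs. -/
def IsProp : Fm → Prop
  | var _ => True
  | bot => True
  | and a b => a.IsProp ∧ b.IsProp
  | or a b => a.IsProp ∧ b.IsProp
  | imp a b => a.IsProp ∧ b.IsProp
  | box _ => False
  | k _ => False

end Fm

/-- Hilbert-style axiom schemes of intuitionistic propositional logic, with
schematic letters ranging over all formulas of `Fm` (so the derivable formulas
are exactly the substitution instances of IPC theorems). -/
inductive IntAx : Fm → Prop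
  | k (φ ψ : Fm) : IntAx (φ.imp (ψ.imp φ))
  | s (φ ψ χ : Fm) : IntAx ((φ.imp (ψ.imp χ)).imp ((φ.imp ψ).imp (φ.imp χ)))
  | andIntro (φ ψ : Fm) : IntAx (φ.imp (ψ.imp (φ.and ψ)))
  | andLeft (φ ψ : Fm) : IntAx ((φ.and ψ).imp φ)
  | andRight (φ ψ : Fm) : IntAx ((φ.and ψ).imp ψ)
  | orInl (φ ψ : Fm) : IntAx (φ.imp (φ.or ψ))
  | orInr (φ ψ : Fm) : IntAx (ψ.imp (φ.or ψ))
  | orElim (φ ψ χ : Fm) : IntAx ((φ.imp χ).imp ((ψ.imp χ).imp ((φ.or ψ).imp χ)))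
  | exfalso (φ : Fm) : IntAx (Fm.bot.imp φ)

/-- Derivability in intuitionistic propositional calculus from hypotheses `Φ`
(Hilbert style, Modus Ponens as the only rule). -/
inductive IPC (Φ : Set Fm) : Fm → Prop
  | hyp {φ} : φ ∈ Φ → IPC Φ φ
  | ax {φ} : IntAx φ → IPC Φ φ
  | mp {φ ψ} : IPC Φ (φ.imp ψ) → IPC Φ φ → IPC Φ ψ

/-- The modal logics L3, EL3⁻ (written `EL3m`), EL3, EL4, EL5. -/
inductive ModalLogic : Type
  | L3 | EL3m | EL3 | EL4 | EL5
  deriving DecidableEq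

/-- The axioms of the logic `L`:
(INT) all theorems of IPC and their substitution instances,
(A1) □(φ∨ψ)→(□φ∨□ψ), (A2) □φ→φ, (A3) □(φ→ψ)→□(□φ→□ψ);
(A7) □φ→□Kφ for the epistemic logics EL3⁻, EL3, EL4, EL5;
(A8) Kφ→¬¬φ for EL3, EL4, EL5; (A4) □φ→□□φ for EL4, EL5;
(A5) ¬□φ→□¬□φ for EL5. -/
inductive IsAxiom : ModalLogic → Fm → Prop
  | int {L : ModalLogic} {φ : Fm} : IPC ∅ φ → IsAxiom L φ
  | a1 (L : ModalLogic) (φ ψ : Fm) :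
      IsAxiom L (((φ.or ψ).box).imp ((φ.box).or (ψ.box)))
  | a2 (L : ModalLogic) (φ : Fm) : IsAxiom L ((φ.box).imp φ)
  | a3 (L : ModalLogic) (φ ψ : Fm) :
      IsAxiom L (((φ.imp ψ).box).imp (((φ.box).imp (ψ.box)).box))
  | a7 {L : ModalLogic} (φ : Fm) : L ≠ ModalLogic.L3 →
      IsAxiom L ((φ.box).imp ((φ.k).box))
  | a8 {L : ModalLogic} (φ : Fm) :
      L = ModalLogic.EL3 ∨ L = ModalLogic.EL4 ∨ L = ModalLogic.EL5 →
      IsAxiom L ((φ.k).imp (φ.neg.neg))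
  | a4 {L : ModalLogic} (φ : Fm) :
      L = ModalLogic.EL4 ∨ L = ModalLogic.EL5 →
      IsAxiom L ((φ.box).imp (φ.box.box))
  | a5 {L : ModalLogic} (φ : Fm) : L = ModalLogic.EL5 →
      IsAxiom L ((φ.box.neg).imp (φ.box.neg.box))

/-- Derivability from hypotheses `Φ` in logic `L`: hypotheses, axioms, the
theorem scheme (T) of tertium non datur, Modus Ponens, and Axiom Necessitation
(applicable only to axioms). -/
inductive Deriv (L : ModalLogic) (Φ : Set Fm) : Fm → Prop
  | hyp {φ} : φ ∈ Φ → Deriv L Φ φ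
  | ax {φ} : IsAxiom L φ → Deriv L Φ φ
  | tnd (φ : Fm) : Deriv L Φ (φ.or φ.neg)
  | mp {φ ψ} : Deriv L Φ (φ.imp ψ) → Deriv L Φ φ → Deriv L Φ ψ
  | an {φ} : IsAxiom L φ → Deriv L Φ (φ.box)

/-- ⊢_L φ : theoremhood in logic `L`. -/
def Thm (L : ModalLogic) (φ : Fm) : Prop := Deriv L ∅ φ

/-!
The countermodel is Gödel's three-element chain `0 < 1 < 2` viewed as a Heyting algebra, with
`□` sending `2` to `2` and everything else to `0`, and `K` read as double negation. Every axiom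
of every logic `L` then takes the value `2`, so necessitated axioms do too; tertium non datur
only reaches `1` (at `x = 1`), but the filter `{1, 2}` is closed under modus ponens, so every
theorem takes a value `≥ 1`. At `x = 1` we get `K x = 2`, hence `□K x → □x` takes the value
`2 ⇨ 0 = 0`.
-/

namespace Fm

variable {α : Type*} [HeytingAlgebra α]

def eval (v : ℕ → α) (boxOp kOp : α → α) : Fm → α
  | var n => v n
  | bot => ⊥
  | and φ ψ => eval v boxOp kOp φ ⊓ eval v boxOp kOp ψ
  | or φ ψ => eval v boxOp kOp φ ⊔ eval v boxOp kOp ψ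
  | imp φ ψ => eval v boxOp kOp φ ⇨ eval v boxOp kOp ψ
  | box φ => boxOp (eval v boxOp kOp φ)
  | k φ => kOp (eval v boxOp kOp φ)

end Fm

section HeytingSemantics

variable {α : Type*} [HeytingAlgebra α] (v : ℕ → α) (boxOp kOp : α → α)

theorem IntAx.eval_eq_top {φ : Fm} (h : IntAx φ) : φ.eval v boxOp kOp = ⊤ := by
  cases h with
  | s φ ψ χ =>
    set a := φ.eval v boxOp kOp
    set b := ψ.eval v boxOp kOp
    set c := χ.eval v boxOp kOp
    show (a ⇨ b ⇨ c) ⇨ (a ⇨ b) ⇨ a ⇨ c = ⊤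
    simp only [himp_eq_top_iff, le_himp_iff]
    calc (a ⇨ b ⇨ c) ⊓ (a ⇨ b) ⊓ a = (a ⊓ (a ⇨ b)) ⊓ (a ⊓ (a ⇨ b ⇨ c)) := by
          rw [inf_inf_distrib_left]; ac_rfl
      _ ≤ b ⊓ (b ⇨ c) := inf_le_inf inf_himp_le inf_himp_le
      _ ≤ c := inf_himp_le
  | orElim => simp [Fm.eval, sup_himp_distrib, himp_eq_top_iff, le_himp_iff]
  | _ => simp [Fm.eval, himp_eq_top_iff, le_himp_iff]

theorem IPC.eval_eq_top {φ : Fm} (h : IPC ∅ φ) : φ.eval v boxOp kOp = ⊤ := by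
  induction h with
  | hyp h => exact absurd h (Set.notMem_empty _)
  | ax h => exact h.eval_eq_top v boxOp kOp
  | mp _ _ ihImp ih => simpa [Fm.eval, ih] using ihImp

end HeytingSemantics

namespace ThreeValued

def box (a : Fin 3) : Fin 3 := if a = 2 then 2 else 0

noncomputable def eval : Fm → Fin 3 := Fm.eval (fun _ => 1) box (·ᶜᶜ)

theorem eval_eq_two_of_isAxiom {L : ModalLogic} {φ : Fm} (h : IsAxiom L φ) : eval φ = 2 := by
  cases h with
  | int h => exact h.eval_eq_top _ _ _
  | a1 φ ψ =>
    exact (by decide : ∀ a b : Fin 3, box (a ⊔ b) ⇨ box a ⊔ box b = 2) (eval φ) (eval ψ)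
  | a2 φ => exact (by decide : ∀ a : Fin 3, box a ⇨ a = 2) (eval φ)
  | a3 φ ψ =>
    exact (by decide : ∀ a b : Fin 3, box (a ⇨ b) ⇨ box (box a ⇨ box b) = 2) (eval φ) (eval ψ)
  | a7 φ _ => exact (by decide : ∀ a : Fin 3, box a ⇨ box (aᶜᶜ) = 2) (eval φ)
  | a8 φ _ => exact (by decide : ∀ a : Fin 3, aᶜᶜ ⇨ ((a ⇨ ⊥) ⇨ ⊥) = 2) (eval φ)
  | a4 φ _ => exact (by decide : ∀ a : Fin 3, box a ⇨ box (box a) = 2) (eval φ)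
  | a5 φ _ => exact (by decide : ∀ a : Fin 3, (box a ⇨ ⊥) ⇨ box (box a ⇨ ⊥) = 2) (eval φ)

theorem one_le_eval_of_deriv {L : ModalLogic} {Φ : Set Fm} (hΦ : ∀ ψ ∈ Φ, 1 ≤ eval ψ) {φ : Fm}
    (h : Deriv L Φ φ) : 1 ≤ eval φ := by
  induction h with
  | hyp h => exact hΦ _ h
  | ax h => simp [eval_eq_two_of_isAxiom h]
  | tnd φ => exact (by decide : ∀ a : Fin 3, 1 ≤ a ⊔ (a ⇨ ⊥)) (eval φ)
  | mp _ _ ihImp ih => exact (le_inf ih ihImp).trans inf_himp_le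
  | an h =>
    show 1 ≤ box (eval _)
    simp [eval_eq_two_of_isAxiom h, box]

theorem eval_box_k_imp_box_var (n : ℕ) : eval ((Fm.var n).k.box.imp (Fm.var n).box) = 0 :=
  (by decide : (box (1ᶜᶜ) ⇨ box 1 : Fin 3) = 0)

end ThreeValued

/-- the scheme □Kφ → □φ is not derivable in EL5. -/
theorem stmt_14 : ∃ φ : Fm, ¬ Thm ModalLogic.EL5 ((φ.k.box).imp (φ.box)) :=
  ⟨.var 0, fun h => by
    simpa [ThreeValued.eval_box_k_imp_box_var] using ThreeValued.one_le_eval_of_deriv (by simp) h⟩
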